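/- arXiv:1601.07434 — 7 statements merged into one kernel-verified Lean document; each statement's English description precedes it below -/
import Mathlib

section
/- Let R be an associative (not necessarily commutative) unital algebra over ℚ, ι a type, and u : ι → ι → R a Čech 1-cocycle (i.e. u i k = u i j + u j k for all i, j, k). Then for all j, k, l one has R₄(u) j k l = (1/2)·((u j k)^2 + (u k l)^2 − (u j l)^2) + (u j k)·(u k l); that is, R₄(u) differs from the 2-cochain (j,k,l) ↦ (u j k)·(u k l) by the Čech coboundary of the 1-cochain (i,j) ↦ (1/2)·(u i j)^2. -/
/-- The degree-4 component `R₄(u)` of the non-abelian Čech coboundary of `exp u`,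
for a 1-cochain `u` with values in a ℚ-algebra `R`. -/
def cechR4 {ι : Type*} {R : Type*} [Ring R] [Algebra ℚ R]
    (u : ι → ι → R) (i j k : ι) : R :=
  ((1 : ℚ)/2) • ((u i j)^2 + (u j k)^2 + (u k i)^2)
    + u i j * u j k + u i j * u k i + u j k * u k i

/-- For a Čech 1-cocycle `u`, `R₄(u) j k l` equals
`(1/2)((u j k)² + (u k l)² − (u j l)²) + (u j k)(u k l)`, i.e. `R₄(u)` differs from the
2-cochain `(j,k,l) ↦ (u j k)(u k l)` by the Čech coboundary of `(i,j) ↦ (1/2)(u i j)²`. -/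
theorem cechR4_eq_coboundary_add {ι : Type*} {R : Type*} [Ring R] [Algebra ℚ R]
    (u : ι → ι → R) (hu : ∀ i j k, u i k = u i j + u j k) :
    ∀ j k l, cechR4 u j k l
      = ((1 : ℚ)/2) • ((u j k)^2 + (u k l)^2 - (u j l)^2) + u j k * u k l := by
  intro j k l
  have h0 : u j j = 0 := by have := hu j j j; exact (left_eq_add.mp this)
  have h1 : u l j = -(u j l) := by
    have := hu j l j; rw [h0] at this; exact eq_neg_of_add_eq_zero_right this.symm
  have h2 : u j l = u j k + u k l := hu j k l
  simp only [cechR4, h1, h2, smul_add, smul_sub, pow_two, mul_add, add_mul, mul_neg, neg_mul,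
    neg_add]
  module
end

section
/- Let R be an associative (not necessarily commutative) unital algebra over ℚ, ι a type, and u : ι → ι → R a Čech 1-cocycle (i.e. u i k = u i j + u j k for all i, j, k). Then the 2-cochain R₄(u) is a 2-cocycle: for all i, j, k, l one has R₄(u) j k l − R₄(u) i k l + R₄(u) i j l − R₄(u) i j k = 0. -/
/-- For a Čech 1-cocycle `u`, the 2-cochain `R₄(u)` is a Čech 2-cocycle. -/
theorem cechR4_is_cocycle {ι : Type*} {R : Type*} [Ring R] [Algebra ℚ R]
    (u : ι → ι → R) (hu : ∀ i j k, u i k = u i j + u j k) :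
    ∀ i j k l, cechR4 u j k l - cechR4 u i k l + cechR4 u i j l - cechR4 u i j k = 0 := by
  have h0 : ∀ x, u x x = 0 := fun x => by
    have h : u x x + 0 = u x x + u x x := by rw [add_zero]; exact hu x x x
    exact (add_left_cancel h).symm
  have hneg : ∀ x y, u y x = - u x y := fun x y => by
    have h := hu x y x
    rw [h0] at h
    exact eq_neg_of_add_eq_zero_right h.symm
  intro i j k l
  set a := u i j with ha
  set b := u j k with hb
  set c := u k l with hc
  have e1 : u i k = a + b := hu i j k
  have e2 : u j l = b + c := hu j k l
  have e3 : u i l = a + (b + c) := by rw [hu i j l, e2]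
  have e4 : u l j = -(b + c) := by rw [hneg, e2]
  have e5 : u l i = -(a + (b + c)) := by rw [hneg, e3]
  have e6 : u k i = -(a + b) := by rw [hneg, e1]
  simp only [cechR4, e1, e2, e3, e4, e5, e6]
  apply smul_right_injective R (two_ne_zero (α := ℚ))
  beta_reduce
  rw [smul_zero]
  simp only [smul_add, smul_sub, smul_neg, smul_smul]
  norm_num
  simp only [one_smul, two_smul]
  noncomm_ring
end

section
/- Let R be an associative (not necessarily commutative) unital algebra over ℚ, ι a type, u : ι → ι → R a Čech 1-cocycle (i.e. u i k = u i j + u j k for all i, j, k), and v : ι → ι → R any 1-cochain. Then for all i, j, k one has R₆(u,v) i j k = R₆(u) i j k + (1/2)·([u i j, v i j] + [u j k, v j k] − [u k i, v k i]) + [u i j, v j k]. -/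
/-- The degree-6 component `R₆(u)` of the non-abelian Čech coboundary of `exp u`. -/
def cechR6 {ι : Type*} {R : Type*} [Ring R] [Algebra ℚ R]
    (u : ι → ι → R) (i j k : ι) : R :=
  u i j * u j k * u k i
    + ((1 : ℚ)/2) • (u i j * (u j k)^2 + (u i j)^2 * u j k + u i j * (u k i)^2
        + (u i j)^2 * u k i + u j k * (u k i)^2 + (u j k)^2 * u k i)
    + ((1 : ℚ)/6) • ((u i j)^3 + (u j k)^3 + (u k i)^3)

/-- The degree-6 component `R₆(u,v)` of the non-abelian Čech coboundary of `exp (u + v)`,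
where `u` has degree 2 and `v` has degree 4. -/
def cechR6' {ι : Type*} {R : Type*} [Ring R] [Algebra ℚ R]
    (u v : ι → ι → R) (i j k : ι) : R :=
  cechR6 u i j k
    + u i j * v j k + v i j * u j k + u i j * v k i + v i j * u k i
    + u j k * v k i + v j k * u k i
    + ((1 : ℚ)/2) • (u i j * v i j + v i j * u i j + u j k * v j k + v j k * u j k
        + u k i * v k i + v k i * u k i)

/-- For a Čech 1-cocycle `u` and any 1-cochain `v`,
`R₆(u,v) i j k = R₆(u) i j k + (1/2)([u i j, v i j] + [u j k, v j k] − [u k i, v k i])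
  + [u i j, v j k]`. -/
theorem cechR6'_eq {ι : Type*} {R : Type*} [Ring R] [Algebra ℚ R]
    (u : ι → ι → R) (hu : ∀ i j k, u i k = u i j + u j k) (v : ι → ι → R) :
    ∀ i j k, cechR6' u v i j k
      = cechR6 u i j k
        + ((1 : ℚ)/2) • ((u i j * v i j - v i j * u i j)
            + (u j k * v j k - v j k * u j k) - (u k i * v k i - v k i * u k i))
        + (u i j * v j k - v j k * u i j) := by
  intro i j k
  have h0 : u k k = 0 := by
    have h := hu k k k; rwa [left_eq_add] at h
  have hk : u k i = -u i j - u j k := by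
    have h1 := hu k i k
    have h2 := hu i j k
    rw [h0, h2] at h1
    linear_combination (norm := abel) -h1
  simp only [cechR6']
  rw [hk]
  simp only [mul_add, add_mul, mul_sub, sub_mul, mul_neg, neg_mul, mul_one, one_mul]
  match_scalars <;> norm_num
end

section
/- Let R be an associative (not necessarily commutative) unital algebra over ℚ, ι a type, and u : ι → ι → R a Čech 1-cocycle (i.e. u i k = u i j + u j k for all i, j, k). Then for all i, j, k, l the Čech coboundary of the 2-cochain R₆(u) satisfies (dR₆(u)) i j k l = (u j k)·(u k l)·(u l j) − (u i k)·(u k l)·(u l i) + (u i j)·(u j l)·(u l i) − (u i j)·(u j k)·(u k i) − (1/2)·[u i j, (u j k)² + (u k l)² − (u j l)²]. -/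
private lemma cechR6_key {R : Type*} [Ring R] [Algebra ℚ R] (a b c : R) :
    (b * c * (-(b + c))
      + ((1 : ℚ)/2) • (b * c^2 + b^2 * c + b * (-(b + c))^2
          + b^2 * (-(b + c)) + c * (-(b + c))^2 + c^2 * (-(b + c)))
      + ((1 : ℚ)/6) • (b^3 + c^3 + (-(b + c))^3))
    - ((a + b) * c * (-(a + (b + c)))
      + ((1 : ℚ)/2) • ((a + b) * c^2 + (a + b)^2 * c + (a + b) * (-(a + (b + c)))^2
          + (a + b)^2 * (-(a + (b + c))) + c * (-(a + (b + c)))^2 + c^2 * (-(a + (b + c))))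
      + ((1 : ℚ)/6) • ((a + b)^3 + c^3 + (-(a + (b + c)))^3))
    + (a * (b + c) * (-(a + (b + c)))
      + ((1 : ℚ)/2) • (a * (b + c)^2 + a^2 * (b + c) + a * (-(a + (b + c)))^2
          + a^2 * (-(a + (b + c))) + (b + c) * (-(a + (b + c)))^2 + (b + c)^2 * (-(a + (b + c))))
      + ((1 : ℚ)/6) • (a^3 + (b + c)^3 + (-(a + (b + c)))^3))
    - (a * b * (-(a + b))
      + ((1 : ℚ)/2) • (a * b^2 + a^2 * b + a * (-(a + b))^2
          + a^2 * (-(a + b)) + b * (-(a + b))^2 + b^2 * (-(a + b)))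
      + ((1 : ℚ)/6) • (a^3 + b^3 + (-(a + b))^3))
    = b * c * (-(b + c)) - (a + b) * c * (-(a + (b + c))) + a * (b + c) * (-(a + (b + c)))
        - a * b * (-(a + b))
        - ((1 : ℚ)/2) • (a * (b^2 + c^2 - (b + c)^2) - (b^2 + c^2 - (b + c)^2) * a) := by
  have e2 : (b * c^2 + b^2 * c + b * (-(b + c))^2
          + b^2 * (-(b + c)) + c * (-(b + c))^2 + c^2 * (-(b + c)))
      - ((a + b) * c^2 + (a + b)^2 * c + (a + b) * (-(a + (b + c)))^2
          + (a + b)^2 * (-(a + (b + c))) + c * (-(a + (b + c)))^2 + c^2 * (-(a + (b + c))))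
      + (a * (b + c)^2 + a^2 * (b + c) + a * (-(a + (b + c)))^2
          + a^2 * (-(a + (b + c))) + (b + c) * (-(a + (b + c)))^2 + (b + c)^2 * (-(a + (b + c))))
      - (a * b^2 + a^2 * b + a * (-(a + b))^2
          + a^2 * (-(a + b)) + b * (-(a + b))^2 + b^2 * (-(a + b)))
      = -(a * (b^2 + c^2 - (b + c)^2) - (b^2 + c^2 - (b + c)^2) * a) := by
    noncomm_ring
  have e6 : (b^3 + c^3 + (-(b + c))^3) - ((a + b)^3 + c^3 + (-(a + (b + c)))^3)
      + (a^3 + (b + c)^3 + (-(a + (b + c)))^3) - (a^3 + b^3 + (-(a + b))^3) = 0 := by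
    noncomm_ring
  calc _ = (b * c * (-(b + c)) - (a + b) * c * (-(a + (b + c)))
        + a * (b + c) * (-(a + (b + c))) - a * b * (-(a + b)))
      + ((1 : ℚ)/2) • ((b * c^2 + b^2 * c + b * (-(b + c))^2
          + b^2 * (-(b + c)) + c * (-(b + c))^2 + c^2 * (-(b + c)))
      - ((a + b) * c^2 + (a + b)^2 * c + (a + b) * (-(a + (b + c)))^2
          + (a + b)^2 * (-(a + (b + c))) + c * (-(a + (b + c)))^2 + c^2 * (-(a + (b + c))))
      + (a * (b + c)^2 + a^2 * (b + c) + a * (-(a + (b + c)))^2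
          + a^2 * (-(a + (b + c))) + (b + c) * (-(a + (b + c)))^2 + (b + c)^2 * (-(a + (b + c))))
      - (a * b^2 + a^2 * b + a * (-(a + b))^2
          + a^2 * (-(a + b)) + b * (-(a + b))^2 + b^2 * (-(a + b))))
      + ((1 : ℚ)/6) • ((b^3 + c^3 + (-(b + c))^3) - ((a + b)^3 + c^3 + (-(a + (b + c)))^3)
      + (a^3 + (b + c)^3 + (-(a + (b + c)))^3) - (a^3 + b^3 + (-(a + b))^3)) := by
        module
    _ = _ := by rw [e2, e6]; module

/-- For a Čech 1-cocycle `u`, the Čech coboundary of `R₆(u)` satisfies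
`(dR₆(u)) i j k l = (u j k)(u k l)(u l j) − (u i k)(u k l)(u l i) + (u i j)(u j l)(u l i)
  − (u i j)(u j k)(u k i) − (1/2)[u i j, (u j k)² + (u k l)² − (u j l)²]`. -/
theorem coboundary_cechR6 {ι : Type*} {R : Type*} [Ring R] [Algebra ℚ R]
    (u : ι → ι → R) (hu : ∀ i j k, u i k = u i j + u j k) :
    ∀ i j k l, cechR6 u j k l - cechR6 u i k l + cechR6 u i j l - cechR6 u i j k
      = u j k * u k l * u l j - u i k * u k l * u l i + u i j * u j l * u l i
        - u i j * u j k * u k i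
        - ((1 : ℚ)/2) • (u i j * ((u j k)^2 + (u k l)^2 - (u j l)^2)
            - ((u j k)^2 + (u k l)^2 - (u j l)^2) * u i j) := by
  have h0 : ∀ i, u i i = 0 := by
    intro i
    have h := hu i i i
    have : u i i + u i i = u i i + 0 := by rw [add_zero]; exact h.symm
    exact (add_left_cancel this)
  have hneg : ∀ i j, u j i = -u i j := by
    intro i j
    have h : u i j + u j i = 0 := by rw [← hu i j i, h0]
    exact eq_neg_of_add_eq_zero_right h
  intro i j k l
  have hik : u i k = u i j + u j k := hu i j k
  have hjl : u j l = u j k + u k l := hu j k l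
  have hil : u i l = u i j + (u j k + u k l) := by
    rw [hu i j l, hjl]
  have hki : u k i = -(u i j + u j k) := by rw [hneg i k, hik]
  have hli : u l i = -(u i j + (u j k + u k l)) := by rw [hneg i l, hil]
  have hlj : u l j = -(u j k + u k l) := by rw [hneg j l, hjl]
  simp only [cechR6, hki, hli, hlj, hik, hjl]
  exact cechR6_key (u i j) (u j k) (u k l)
end

section
/- Let R be a (not necessarily commutative) ring, ι a type, and u : ι → ι → R a Čech 1-cocycle (i.e. u i k = u i j + u j k for all i, j, k). Then for all i, j, k, l one has (u j k)·(u k l)·(u l j) − (u i k)·(u k l)·(u l i) + (u i j)·(u j l)·(u l i) − (u i j)·(u j k)·(u k i) + [u i j, (u j k)·(u k l)] = 0. -/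
/-! Writing `a = u i j`, `b = u j k`, `c = u k l`, the cocycle condition expresses every value of
`u` on the vertices `i, j, k, l` through `a`, `b`, `c` (e.g. `u l i = -(a + b + c)`), and the
identity becomes a polynomial identity in three non-commuting variables. -/

section Cocycle

variable {ι G : Type*} [AddGroup G] {u : ι → ι → G}

theorem cocycle_self_eq_zero (hu : ∀ i j k, u i k = u i j + u j k) (i : ι) : u i i = 0 :=
  left_eq_add.mp (hu i i i)

theorem cocycle_swap (hu : ∀ i j k, u i k = u i j + u j k) (i j : ι) : u j i = -u i j :=
  (neg_eq_of_add_eq_zero_right (by rw [← hu, cocycle_self_eq_zero hu])).symm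

end Cocycle

theorem triple_product_identity_of_consecutive_edges {R : Type*} [Ring R] (a b c : R) :
    b * c * -(b + c) - (a + b) * c * -(a + b + c) + a * (b + c) * -(a + b + c)
      - a * b * -(a + b) + (a * (b * c) - b * c * a) = 0 := by
  noncomm_ring

/-- For a Čech 1-cocycle `u` with values in a (not necessarily commutative) ring,
`(u j k)(u k l)(u l j) − (u i k)(u k l)(u l i) + (u i j)(u j l)(u l i)
  − (u i j)(u j k)(u k i) + [u i j, (u j k)(u k l)] = 0`. -/
theorem cocycle_triple_product_identity {ι : Type*} {R : Type*} [Ring R]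
    (u : ι → ι → R) (hu : ∀ i j k, u i k = u i j + u j k) :
    ∀ i j k l, u j k * u k l * u l j - u i k * u k l * u l i + u i j * u j l * u l i
      - u i j * u j k * u k i
      + (u i j * (u j k * u k l) - u j k * u k l * u i j) = 0 := by
  intro i j k l
  have hik : u i k = u i j + u j k := hu i j k
  have hjl : u j l = u j k + u k l := hu j k l
  have hil : u i l = u i j + u j k + u k l := by rw [hu i j l, hjl, add_assoc]
  rw [cocycle_swap hu j l, cocycle_swap hu i l, cocycle_swap hu i k, hil, hjl, hik]
  exact triple_product_identity_of_consecutive_edges (u i j) (u j k) (u k l)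
end

section
/- Let R be an associative (not necessarily commutative) unital algebra over ℚ, ι a type, and u : ι → ι → R a Čech 1-cocycle (i.e. u i k = u i j + u j k for all i, j, k). Then for all i, j, k, l the Čech coboundary of the 2-cochain R₆(u) satisfies (dR₆(u)) i j k l = −[u i j, R₄(u) j k l]. -/
/-- For a Čech 1-cocycle `u`, the Čech coboundary of `R₆(u)` satisfies
`(dR₆(u)) i j k l = −[u i j, R₄(u) j k l]`. -/
theorem coboundary_cechR6_eq_neg_commutator_cechR4 {ι : Type*} {R : Type*}
    [Ring R] [Algebra ℚ R]
    (u : ι → ι → R) (hu : ∀ i j k, u i k = u i j + u j k) :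
    ∀ i j k l, cechR6 u j k l - cechR6 u i k l + cechR6 u i j l - cechR6 u i j k
      = -(u i j * cechR4 u j k l - cechR4 u j k l * u i j) := by
  intro i j k l
  have h0 : ∀ m, u m m = 0 := fun m => left_eq_add.mp (hu m m m)
  have hskew : ∀ m n, u n m = -(u m n) := by
    intro m n
    have h : u m n + u n m = 0 := by rw [← hu m n m, h0 m]
    exact eq_neg_of_add_eq_zero_right h
  have hik : u i k = u i j + u j k := hu i j k
  have hil : u i l = u i j + u j k + u k l := by rw [hu i k l, hik]
  have hjl : u j l = u j k + u k l := hu j k l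
  have hlj : u l j = -(u j k + u k l) := by rw [hskew j l, hjl]
  have hli : u l i = -(u i j + u j k + u k l) := by rw [hskew i l, hil]
  have hki : u k i = -(u i j + u j k) := by rw [hskew i k, hik]
  simp only [cechR4, cechR6, hik, hil, hjl, hlj, hli, hki]
  have hinj : Function.Injective (fun x : R => (6 : ℚ) • x) := by
    intro x y h
    have h2 := congrArg (fun z : R => ((6 : ℚ)⁻¹) • z) h
    simpa [smul_smul] using h2
  apply hinj
  simp only [smul_add, smul_sub, smul_neg, smul_smul, mul_smul_comm, smul_mul_assoc,
    mul_add, add_mul, mul_neg, neg_mul]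
  norm_num
  simp only [show (6 : ℚ) = ((6 : ℕ) : ℚ) by norm_num,
    show (3 : ℚ) = ((3 : ℕ) : ℚ) by norm_num, Nat.cast_smul_eq_nsmul]
  noncomm_ring
end

section
/- Let R be an associative (not necessarily commutative) unital algebra over ℚ, ι a type, u : ι → ι → R a Čech 1-cocycle (i.e. u i k = u i j + u j k for all i, j, k), and v : ι → ι → R a 1-cochain satisfying (dv) i j k = −R₄(u) i j k for all i, j, k, where (dv) i j k := v j k − v i k + v i j. Then the 2-cochain R₆(u,v) is a 2-cocycle: for all i, j, k, l one has R₆(u,v) j k l − R₆(u,v) i k l + R₆(u,v) i j l − R₆(u,v) i j k = 0. -/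
set_option maxHeartbeats 2000000 in
/-- If `u` is a Čech 1-cocycle and `v` is a 1-cochain with `dv = −R₄(u)`, then the
2-cochain `R₆(u,v)` is a Čech 2-cocycle. -/
theorem cechR6'_is_cocycle {ι : Type*} {R : Type*} [Ring R] [Algebra ℚ R]
    (u : ι → ι → R) (hu : ∀ i j k, u i k = u i j + u j k)
    (v : ι → ι → R) (hv : ∀ i j k, v j k - v i k + v i j = -cechR4 u i j k) :
    ∀ i j k l, cechR6' u v j k l - cechR6' u v i k l + cechR6' u v i j l
      - cechR6' u v i j k = 0 := by
  have hu0 : ∀ m, u m m = 0 := fun m => left_eq_add.mp (hu m m m)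
  have husym : ∀ m n, u n m = -u m n := fun m n => by
    have h := hu m n m; rw [hu0] at h
    exact eq_neg_of_add_eq_zero_right h.symm
  have hv0 : ∀ m, v m m = 0 := fun m => by
    simpa [cechR4, hu0] using hv m m m
  have hr4 : ∀ m n, cechR4 u m n m = 0 := fun m n => by
    rw [cechR4, hu0, husym m n]
    simp only [sq, mul_neg, neg_mul, neg_neg, mul_zero, zero_mul, add_zero, neg_zero]
    module
  have hvsym : ∀ m n, v n m = -v m n := fun m n => by
    have h := hv m n m
    rw [hr4, hv0, neg_zero, sub_zero] at h
    exact eq_neg_of_add_eq_zero_left h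
  intro i j k l
  have f1 : v i k = v i j + v j k + cechR4 u i j k := by
    rw [show cechR4 u i j k = -(v j k - v i k + v i j) from by rw [hv i j k, neg_neg]]
    abel
  have f2 : v i l = v i j + v j l + cechR4 u i j l := by
    rw [show cechR4 u i j l = -(v j l - v i l + v i j) from by rw [hv i j l, neg_neg]]
    abel
  have f3 : v k l = v j l - v j k - cechR4 u j k l := by
    rw [show cechR4 u j k l = -(v k l - v j l + v j k) from by rw [hv j k l, neg_neg]]
    abel
  simp only [cechR6', cechR6]
  rw [hvsym j l, hvsym i l, hvsym i k, f1, f2, f3]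
  simp only [cechR4]
  rw [husym j l, husym i l, husym i k, hu i j k, hu j k l, hu i j l, hu j k l]
  simp only [sq, pow_succ, pow_zero, one_mul]
  simp only [mul_add, add_mul, mul_sub, sub_mul, neg_mul, mul_neg, neg_neg, smul_add,
    smul_sub, smul_neg, mul_assoc, mul_smul_comm, smul_mul_assoc, smul_smul]
  module
end
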